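/- arXiv:2003.07735 — 9 statements merged into one kernel-verified Lean document; each statement's English description precedes it below -/
import Mathlib

section
/- The sequences u_n and v_n satisfy the linear first-order system u_{n+1} = b_n·u_n + a_n·v_n and v_{n+1} = d_n·u_n + c_n·v_n for all n ∈ ℕ, with u_0 = x_0 and v_0 = y_0. -/
open Finset Filter Topology

theorem stmt_1
    (x y a b c d : ℕ → ℝ)
    (hx0 : 0 < x 0) (hy0 : 0 < y 0)
    (hapos : ∀ n, 0 < a n) (hbpos : ∀ n, 0 < b n)
    (hcpos : ∀ n, 0 < c n) (hdpos : ∀ n, 0 < d n)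
    (haper : ∀ n, a (n + 2) = a n) (hbper : ∀ n, b (n + 2) = b n)
    (hcper : ∀ n, c (n + 2) = c n) (hdper : ∀ n, d (n + 2) = d n)
    (hxrec : ∀ n, x (n + 1) = a n / x n + b n / y n)
    (hyrec : ∀ n, y (n + 1) = c n / x n + d n / y n)
    (u v : ℕ → ℝ)
    (hu : ∀ n, u n = (∏ k ∈ Finset.range (n + 1), x k) * ∏ k ∈ Finset.range n, y k)
    (hv : ∀ n, v n = (∏ k ∈ Finset.range n, x k) * ∏ k ∈ Finset.range (n + 1), y k)
    : (∀ n : ℕ, u (n + 1) = b n * u n + a n * v n ∧ v (n + 1) = d n * u n + c n * v n) ∧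
      u 0 = x 0 ∧ v 0 = y 0 := by
  have hpos : ∀ n, 0 < x n ∧ 0 < y n := by
    intro n
    induction n with
    | zero => exact ⟨hx0, hy0⟩
    | succ n ih =>
      obtain ⟨hxn, hyn⟩ := ih
      refine ⟨?_, ?_⟩
      · rw [hxrec]
        have := hapos n; have := hbpos n; positivity
      · rw [hyrec]
        have := hcpos n; have := hdpos n; positivity
  refine ⟨?_, by simp [hu 0], by simp [hv 0]⟩
  intro n
  obtain ⟨hxn, hyn⟩ := hpos n
  have hxne : x n ≠ 0 := ne_of_gt hxn
  have hyne : y n ≠ 0 := ne_of_gt hyn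
  rw [hu, hv, hu, hv, prod_range_succ (f := x) (n := n + 1),
    prod_range_succ (f := y) (n := n + 1), prod_range_succ (f := x) (n := n),
    prod_range_succ (f := y) (n := n), hxrec, hyrec]
  constructor <;> (field_simp; ring)
end

section
/- The even-indexed subsequences of u_n and v_n satisfy the two-step linear system u_{2n+2} = (a_1 d_0 + b_0 b_1)·u_{2n} + (a_0 b_1 + a_1 c_0)·v_{2n} and v_{2n+2} = (b_0 d_1 + c_1 d_0)·u_{2n} + (a_0 d_1 + c_0 c_1)·v_{2n} for all n ∈ ℕ. -/
open Finset Filter Topology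

theorem stmt_2
    (x y a b c d : ℕ → ℝ)
    (hx0 : 0 < x 0) (hy0 : 0 < y 0)
    (hapos : ∀ n, 0 < a n) (hbpos : ∀ n, 0 < b n)
    (hcpos : ∀ n, 0 < c n) (hdpos : ∀ n, 0 < d n)
    (haper : ∀ n, a (n + 2) = a n) (hbper : ∀ n, b (n + 2) = b n)
    (hcper : ∀ n, c (n + 2) = c n) (hdper : ∀ n, d (n + 2) = d n)
    (hxrec : ∀ n, x (n + 1) = a n / x n + b n / y n)
    (hyrec : ∀ n, y (n + 1) = c n / x n + d n / y n)
    (u v : ℕ → ℝ)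
    (hu : ∀ n, u n = (∏ k ∈ Finset.range (n + 1), x k) * ∏ k ∈ Finset.range n, y k)
    (hv : ∀ n, v n = (∏ k ∈ Finset.range n, x k) * ∏ k ∈ Finset.range (n + 1), y k)
    : ∀ n : ℕ,
      u (2 * n + 2) = (a 1 * d 0 + b 0 * b 1) * u (2 * n) + (a 0 * b 1 + a 1 * c 0) * v (2 * n) ∧
      v (2 * n + 2) = (b 0 * d 1 + c 1 * d 0) * u (2 * n) + (a 0 * d 1 + c 0 * c 1) * v (2 * n) := by
  have hpos : ∀ n, 0 < x n ∧ 0 < y n := by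
    intro n
    induction n with
    | zero => exact ⟨hx0, hy0⟩
    | succ k ih =>
      obtain ⟨hxk, hyk⟩ := ih
      have ha := hapos k
      have hb := hbpos k
      have hc := hcpos k
      have hd := hdpos k
      refine ⟨?_, ?_⟩
      · rw [hxrec]; positivity
      · rw [hyrec]; positivity
  have hstep : ∀ n, u (n + 1) = b n * u n + a n * v n ∧
      v (n + 1) = d n * u n + c n * v n := by
    intro n
    obtain ⟨hxn, hyn⟩ := hpos n
    have hxne : x n ≠ 0 := hxn.ne'
    have hyne : y n ≠ 0 := hyn.ne'
    constructor
    · rw [hu, hu, hv]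
      simp only [Finset.prod_range_succ, hxrec n]
      field_simp
      ring
    · rw [hv, hu, hv]
      simp only [Finset.prod_range_succ, hyrec n]
      field_simp
      ring
  have hper : ∀ (f : ℕ → ℝ), (∀ n, f (n + 2) = f n) →
      ∀ n, f (2 * n) = f 0 ∧ f (2 * n + 1) = f 1 := by
    intro f hf n
    induction n with
    | zero => simp
    | succ k ih =>
      constructor
      · have h : 2 * (k + 1) = 2 * k + 2 := by ring
        rw [h, hf]; exact ih.1
      · have h : 2 * (k + 1) + 1 = (2 * k + 1) + 2 := by ring
        rw [h, hf]; exact ih.2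
  intro n
  have h2 : 2 * n + 2 = (2 * n + 1) + 1 := rfl
  have s1 := hstep (2 * n)
  have s2 := hstep (2 * n + 1)
  have pa := hper a haper n
  have pb := hper b hbper n
  have pc := hper c hcper n
  have pd := hper d hdper n
  constructor
  · rw [h2, s2.1, s1.1, s1.2, pa.1, pa.2, pb.1, pb.2, pc.1, pd.1]
    ring
  · rw [h2, s2.2, s1.1, s1.2, pa.1, pb.1, pc.1, pc.2, pd.1, pd.2]
    ring
end

section
/- If the matrix A has rank one, i.e. (a_1 d_0 + b_0 b_1)(a_0 d_1 + c_0 c_1) = (a_0 b_1 + a_1 c_0)(b_0 d_1 + c_1 d_0), then v_{2n} = K·u_{2n} for all n ≥ 1, where K = (b_0 d_1 + c_1 d_0)/(a_1 d_0 + b_0 b_1). -/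
open Finset Matrix

/-!
Since `x n * v n = y n * u n`, the products obey the linear recurrence
`(u (n+1), v (n+1)) = M n (u n, v n)` with `M n = !![b n, a n; d n, c n]`. By periodicity,
`(u (2m+2), v (2m+2)) = M 1 M 0 (u (2m), v (2m))`, and `M 1 M 0 = A`. A rank-one `A` has second
row `K` times its first, so every vector in its image has second coordinate `K` times its first.
-/

lemma Matrix.mulVec_one_eq_of_det_eq_zero {𝕜 : Type*} [Field 𝕜] {M : Matrix (Fin 2) (Fin 2) 𝕜}
    (h00 : M 0 0 ≠ 0) (hdet : M.det = 0) (w : Fin 2 → 𝕜) :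
    (M *ᵥ w) 1 = M 1 0 / M 0 0 * (M *ᵥ w) 0 := by
  rw [det_fin_two] at hdet
  simp only [mulVec_fin_two, cons_val_zero, cons_val_one]
  field_simp
  linear_combination w 1 * hdet

lemma Function.Periodic.mulVec_two_step {ι R : Type*} [Fintype ι] [CommSemiring R]
    {M : ℕ → Matrix ι ι R} {w : ℕ → ι → R} (hM : Function.Periodic M 2)
    (hw : ∀ n, w (n + 1) = M n *ᵥ w n) (m : ℕ) :
    w (2 * m + 2) = (M 1 * M 0) *ᵥ w (2 * m) := by
  have h0 : M (2 * m) = M 0 := by simpa [mul_comm] using hM.nat_mul_eq m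
  have h1 : M (2 * m + 1) = M 1 := by simpa [mul_comm, add_comm] using hM.nat_mul m 1
  rw [hw, hw, h0, h1, mulVec_mulVec]

def stepMatrix (a b c d : ℕ → ℝ) (n : ℕ) : Matrix (Fin 2) (Fin 2) ℝ :=
  !![b n, a n; d n, c n]

lemma stepMatrix_one_mul_stepMatrix_zero (a b c d : ℕ → ℝ) :
    stepMatrix a b c d 1 * stepMatrix a b c d 0 =
      !![a 1 * d 0 + b 0 * b 1, a 0 * b 1 + a 1 * c 0;
        b 0 * d 1 + c 1 * d 0, a 0 * d 1 + c 0 * c 1] := by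
  rw [stepMatrix, stepMatrix, mul_fin_two]
  ring_nf

section Recurrence

variable {x y a b c d u v : ℕ → ℝ}

lemma stepMatrix_periodic (haper : ∀ n, a (n + 2) = a n) (hbper : ∀ n, b (n + 2) = b n)
    (hcper : ∀ n, c (n + 2) = c n) (hdper : ∀ n, d (n + 2) = d n) :
    Function.Periodic (stepMatrix a b c d) 2 := by
  intro n
  simp only [stepMatrix, haper, hbper, hcper, hdper]

lemma pos_of_recurrence (hx0 : 0 < x 0) (hy0 : 0 < y 0)
    (hapos : ∀ n, 0 < a n) (hbpos : ∀ n, 0 < b n) (hcpos : ∀ n, 0 < c n) (hdpos : ∀ n, 0 < d n)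
    (hxrec : ∀ n, x (n + 1) = a n / x n + b n / y n)
    (hyrec : ∀ n, y (n + 1) = c n / x n + d n / y n) (n : ℕ) :
    0 < x n ∧ 0 < y n := by
  induction n with
  | zero => exact ⟨hx0, hy0⟩
  | succ n ih =>
    obtain ⟨hx, hy⟩ := ih
    have := hapos n; have := hbpos n; have := hcpos n; have := hdpos n
    rw [hxrec, hyrec]
    constructor <;> positivity

variable (hu : ∀ n, u n = (∏ k ∈ range (n + 1), x k) * ∏ k ∈ range n, y k)
  (hv : ∀ n, v n = (∏ k ∈ range n, x k) * ∏ k ∈ range (n + 1), y k)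
include hu hv

lemma products_succ_eq_stepMatrix_mulVec (hxrec : ∀ n, x (n + 1) = a n / x n + b n / y n)
    (hyrec : ∀ n, y (n + 1) = c n / x n + d n / y n) {n : ℕ} (hx : x n ≠ 0) (hy : y n ≠ 0) :
    ![u (n + 1), v (n + 1)] = stepMatrix a b c d n *ᵥ ![u n, v n] := by
  have hxv : x n * v n = y n * u n := by
    simp only [hu, hv, prod_range_succ]; ring
  have hu' : u (n + 1) = x (n + 1) * (y n * u n) := by
    simp only [hu, prod_range_succ]; ring
  have hv' : v (n + 1) = y (n + 1) * (x n * v n) := by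
    simp only [hv, prod_range_succ]; ring
  simp only [mulVec_fin_two, stepMatrix, of_apply, cons_val',
    cons_val_zero, cons_val_one, empty_val', cons_val_fin_one]
  refine vec2_eq ?_ ?_
  · rw [hu', hxrec]; field_simp; linear_combination -a n * hxv
  · rw [hv', hyrec]; field_simp; linear_combination d n * hxv

end Recurrence

theorem stmt_3
    (x y a b c d : ℕ → ℝ)
    (hx0 : 0 < x 0) (hy0 : 0 < y 0)
    (hapos : ∀ n, 0 < a n) (hbpos : ∀ n, 0 < b n)
    (hcpos : ∀ n, 0 < c n) (hdpos : ∀ n, 0 < d n)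
    (haper : ∀ n, a (n + 2) = a n) (hbper : ∀ n, b (n + 2) = b n)
    (hcper : ∀ n, c (n + 2) = c n) (hdper : ∀ n, d (n + 2) = d n)
    (hxrec : ∀ n, x (n + 1) = a n / x n + b n / y n)
    (hyrec : ∀ n, y (n + 1) = c n / x n + d n / y n)
    (u v : ℕ → ℝ)
    (hu : ∀ n, u n = (∏ k ∈ Finset.range (n + 1), x k) * ∏ k ∈ Finset.range n, y k)
    (hv : ∀ n, v n = (∏ k ∈ Finset.range n, x k) * ∏ k ∈ Finset.range (n + 1), y k)
    (hrank : (a 1 * d 0 + b 0 * b 1) * (a 0 * d 1 + c 0 * c 1) =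
      (a 0 * b 1 + a 1 * c 0) * (b 0 * d 1 + c 1 * d 0))
    (K : ℝ) (hK : K = (b 0 * d 1 + c 1 * d 0) / (a 1 * d 0 + b 0 * b 1))
    : ∀ n : ℕ, 1 ≤ n → v (2 * n) = K * u (2 * n) := by
  intro n hn
  obtain ⟨m, rfl⟩ := Nat.exists_eq_add_of_le' hn
  rw [mul_add, mul_one]
  have hpos := pos_of_recurrence hx0 hy0 hapos hbpos hcpos hdpos hxrec hyrec
  have htwo := (stepMatrix_periodic haper hbper hcper hdper).mulVec_two_step
    (w := fun n ↦ ![u n, v n])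
    (fun n ↦ products_succ_eq_stepMatrix_mulVec hu hv hxrec hyrec (hpos n).1.ne' (hpos n).2.ne') m
  rw [stepMatrix_one_mul_stepMatrix_zero] at htwo
  have hA00 : a 1 * d 0 + b 0 * b 1 ≠ 0 := by
    have := hapos 1; have := hdpos 0; have := hbpos 0; have := hbpos 1
    positivity
  have hdet := det_fin_two_of (a 1 * d 0 + b 0 * b 1) (a 0 * b 1 + a 1 * c 0)
    (b 0 * d 1 + c 1 * d 0) (a 0 * d 1 + c 0 * c 1)
  rw [hrank, sub_self] at hdet
  have key := mulVec_one_eq_of_det_eq_zero hA00 hdet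
    ![u (2 * m), v (2 * m)]
  rw [← htwo] at key
  simpa [hK] using key
end

section
/- If the matrix A has rank one, i.e. (a_1 d_0 + b_0 b_1)(a_0 d_1 + c_0 c_1) = (a_0 b_1 + a_1 c_0)(b_0 d_1 + c_1 d_0), then for all n ≥ 1 one has u_{2n+1} = (b_0 + K a_0)·M^{n-1}·u_2 and v_{2n+1} = (d_0 + K c_0)·M^{n-1}·u_2, where K = (b_0 d_1 + c_1 d_0)/(a_1 d_0 + b_0 b_1) and M = a_1 d_0 + b_0 b_1 + K·(a_0 b_1 + a_1 c_0). -/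
/-!
Substituting the recursion into the products linearizes the system:
`u (n + 1) = b n * u n + a n * v n` and `v (n + 1) = d n * u n + c n * v n`.
Over a full period `(u (2m), v (2m))` is therefore multiplied by the matrix `A`. When `A` has rank
one its second row is `K` times its first, so from the second step on `v (2m) = K * u (2m)`, and
`u (2m)` grows geometrically with ratio `M`; one more half-step gives the odd indices.
-/

open Finset

lemma Function.Periodic.apply_two_mul {α : Type*} {f : ℕ → α} (hf : Function.Periodic f 2)
    (m : ℕ) : f (2 * m) = f 0 := by
  simpa [mul_comm] using hf.nat_mul_eq m

lemma Function.Periodic.apply_two_mul_add_one {α : Type*} {f : ℕ → α}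
    (hf : Function.Periodic f 2) (m : ℕ) : f (2 * m + 1) = f 1 := by
  simpa [mul_comm, add_comm] using hf.nat_mul m 1

section RankOne

variable {p q : ℕ → ℝ} {α β γ δ : ℝ}

lemma rankOne_snd_eq (hα : α ≠ 0) (hrank : α * δ = β * γ)
    (hp : ∀ m, p (m + 1) = α * p m + β * q m) (hq : ∀ m, q (m + 1) = γ * p m + δ * q m)
    (m : ℕ) : q (m + 1) = γ / α * p (m + 1) := by
  rw [hp, hq]
  field_simp
  linear_combination q m * hrank

lemma rankOne_fst_eq_pow (hα : α ≠ 0) (hrank : α * δ = β * γ)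
    (hp : ∀ m, p (m + 1) = α * p m + β * q m) (hq : ∀ m, q (m + 1) = γ * p m + δ * q m)
    (m : ℕ) : p (m + 1) = (α + γ / α * β) ^ m * p 1 := by
  induction m with
  | zero => simp
  | succ m ih =>
    rw [hp, rankOne_snd_eq hα hrank hp hq, ih]
    ring

end RankOne

section Linearization

variable {x y a b c d u v : ℕ → ℝ}

lemma pos_of_rec (hx0 : 0 < x 0) (hy0 : 0 < y 0)
    (hapos : ∀ n, 0 < a n) (hbpos : ∀ n, 0 < b n)
    (hcpos : ∀ n, 0 < c n) (hdpos : ∀ n, 0 < d n)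
    (hxrec : ∀ n, x (n + 1) = a n / x n + b n / y n)
    (hyrec : ∀ n, y (n + 1) = c n / x n + d n / y n) :
    ∀ n, 0 < x n ∧ 0 < y n
  | 0 => ⟨hx0, hy0⟩
  | n + 1 => by
    obtain ⟨hx, hy⟩ := pos_of_rec hx0 hy0 hapos hbpos hcpos hdpos hxrec hyrec n
    rw [hxrec, hyrec]
    exact ⟨by have := hapos n; have := hbpos n; positivity,
      by have := hcpos n; have := hdpos n; positivity⟩

lemma u_succ_of_rec (hu : ∀ n, u n = (∏ k ∈ range (n + 1), x k) * ∏ k ∈ range n, y k)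
    (hv : ∀ n, v n = (∏ k ∈ range n, x k) * ∏ k ∈ range (n + 1), y k) {n : ℕ}
    (hx : x n ≠ 0) (hy : y n ≠ 0) (hxrec : x (n + 1) = a n / x n + b n / y n) :
    u (n + 1) = b n * u n + a n * v n := by
  simp only [hu, hv, prod_range_succ, hxrec]
  field_simp
  ring

lemma v_succ_of_rec (hu : ∀ n, u n = (∏ k ∈ range (n + 1), x k) * ∏ k ∈ range n, y k)
    (hv : ∀ n, v n = (∏ k ∈ range n, x k) * ∏ k ∈ range (n + 1), y k) {n : ℕ}
    (hx : x n ≠ 0) (hy : y n ≠ 0) (hyrec : y (n + 1) = c n / x n + d n / y n) :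
    v (n + 1) = d n * u n + c n * v n := by
  simp only [hu, hv, prod_range_succ, hyrec]
  field_simp
  ring

end Linearization

section TwoPeriodic

variable {a b c d u v : ℕ → ℝ}

lemma u_two_mul_succ (ha : Function.Periodic a 2) (hb : Function.Periodic b 2)
    (hc : Function.Periodic c 2) (hd : Function.Periodic d 2)
    (hus : ∀ n, u (n + 1) = b n * u n + a n * v n) (hvs : ∀ n, v (n + 1) = d n * u n + c n * v n)
    (m : ℕ) :
    u (2 * (m + 1)) = (a 1 * d 0 + b 0 * b 1) * u (2 * m) + (a 0 * b 1 + a 1 * c 0) * v (2 * m) := by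
  rw [mul_add, mul_one, hus, hus, hvs, ha.apply_two_mul, ha.apply_two_mul_add_one,
    hb.apply_two_mul, hb.apply_two_mul_add_one, hc.apply_two_mul, hd.apply_two_mul]
  ring

lemma v_two_mul_succ (ha : Function.Periodic a 2) (hb : Function.Periodic b 2)
    (hc : Function.Periodic c 2) (hd : Function.Periodic d 2)
    (hus : ∀ n, u (n + 1) = b n * u n + a n * v n) (hvs : ∀ n, v (n + 1) = d n * u n + c n * v n)
    (m : ℕ) :
    v (2 * (m + 1)) = (b 0 * d 1 + c 1 * d 0) * u (2 * m) + (a 0 * d 1 + c 0 * c 1) * v (2 * m) := by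
  rw [mul_add, mul_one, hvs, hus, hvs, ha.apply_two_mul, hb.apply_two_mul, hc.apply_two_mul,
    hc.apply_two_mul_add_one, hd.apply_two_mul, hd.apply_two_mul_add_one]
  ring

end TwoPeriodic

theorem stmt_5
    (x y a b c d : ℕ → ℝ)
    (hx0 : 0 < x 0) (hy0 : 0 < y 0)
    (hapos : ∀ n, 0 < a n) (hbpos : ∀ n, 0 < b n)
    (hcpos : ∀ n, 0 < c n) (hdpos : ∀ n, 0 < d n)
    (haper : ∀ n, a (n + 2) = a n) (hbper : ∀ n, b (n + 2) = b n)
    (hcper : ∀ n, c (n + 2) = c n) (hdper : ∀ n, d (n + 2) = d n)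
    (hxrec : ∀ n, x (n + 1) = a n / x n + b n / y n)
    (hyrec : ∀ n, y (n + 1) = c n / x n + d n / y n)
    (u v : ℕ → ℝ)
    (hu : ∀ n, u n = (∏ k ∈ Finset.range (n + 1), x k) * ∏ k ∈ Finset.range n, y k)
    (hv : ∀ n, v n = (∏ k ∈ Finset.range n, x k) * ∏ k ∈ Finset.range (n + 1), y k)
    (hrank : (a 1 * d 0 + b 0 * b 1) * (a 0 * d 1 + c 0 * c 1) =
      (a 0 * b 1 + a 1 * c 0) * (b 0 * d 1 + c 1 * d 0))
    (K : ℝ) (hK : K = (b 0 * d 1 + c 1 * d 0) / (a 1 * d 0 + b 0 * b 1))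
    (M : ℝ) (hM : M = a 1 * d 0 + b 0 * b 1 + K * (a 0 * b 1 + a 1 * c 0))
    : ∀ n : ℕ, 1 ≤ n →
      u (2 * n + 1) = (b 0 + K * a 0) * M ^ (n - 1) * u 2 ∧
      v (2 * n + 1) = (d 0 + K * c 0) * M ^ (n - 1) * u 2 := by
  have hα : a 1 * d 0 + b 0 * b 1 ≠ 0 := by
    have := hapos 1; have := hdpos 0; have := hbpos 0; have := hbpos 1; positivity
  have hxy := pos_of_rec hx0 hy0 hapos hbpos hcpos hdpos hxrec hyrec
  have hus n := u_succ_of_rec hu hv (hxy n).1.ne' (hxy n).2.ne' (hxrec n)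
  have hvs n := v_succ_of_rec hu hv (hxy n).1.ne' (hxy n).2.ne' (hyrec n)
  have hp := u_two_mul_succ haper hbper hcper hdper hus hvs
  have hq := v_two_mul_succ haper hbper hcper hdper hus hvs
  intro n hn
  obtain ⟨m, rfl⟩ := Nat.exists_eq_add_of_le' hn
  have hvK : v (2 * (m + 1)) = K * u (2 * (m + 1)) :=
    hK ▸ rankOne_snd_eq (p := (u <| 2 * ·)) (q := (v <| 2 * ·)) hα hrank hp hq m
  have huM : u (2 * (m + 1)) = M ^ m * u 2 :=
    hM ▸ hK ▸ rankOne_fst_eq_pow (p := (u <| 2 * ·)) (q := (v <| 2 * ·)) hα hrank hp hq m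
  rw [hus, hvs, Function.Periodic.apply_two_mul haper, Function.Periodic.apply_two_mul hbper,
    Function.Periodic.apply_two_mul hcper, Function.Periodic.apply_two_mul hdper, hvK, huM,
    Nat.add_sub_cancel]
  constructor <;> ring
end

section
/- For all n ∈ ℕ the solution satisfies the product formulas: x_{2n} = x_0 · ∏_{k=1}^{n} (u_{2k}·v_{2k-2}) / ((b_0 u_{2k-2} + a_0 v_{2k-2})(d_0 u_{2k-2} + c_0 v_{2k-2})), x_{2n+1} = x_1 · ∏_{k=1}^{n} ((b_0 u_{2k} + a_0 v_{2k})(d_0 u_{2k-2} + c_0 v_{2k-2})) / (u_{2k}·v_{2k}), y_{2n} = y_0 · ∏_{k=1}^{n} (v_{2k}·u_{2k-2}) / ((d_0 u_{2k-2} + c_0 v_{2k-2})(b_0 u_{2k-2} + a_0 v_{2k-2})), and y_{2n+1} = y_1 · ∏_{k=1}^{n} ((d_0 u_{2k} + c_0 v_{2k})(b_0 u_{2k-2} + a_0 v_{2k-2})) / (v_{2k}·u_{2k}). -/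
open Finset Filter Topology

theorem stmt_7
    (x y a b c d : ℕ → ℝ)
    (hx0 : 0 < x 0) (hy0 : 0 < y 0)
    (hapos : ∀ n, 0 < a n) (hbpos : ∀ n, 0 < b n)
    (hcpos : ∀ n, 0 < c n) (hdpos : ∀ n, 0 < d n)
    (haper : ∀ n, a (n + 2) = a n) (hbper : ∀ n, b (n + 2) = b n)
    (hcper : ∀ n, c (n + 2) = c n) (hdper : ∀ n, d (n + 2) = d n)
    (hxrec : ∀ n, x (n + 1) = a n / x n + b n / y n)
    (hyrec : ∀ n, y (n + 1) = c n / x n + d n / y n)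
    (u v : ℕ → ℝ)
    (hu : ∀ n, u n = (∏ k ∈ Finset.range (n + 1), x k) * ∏ k ∈ Finset.range n, y k)
    (hv : ∀ n, v n = (∏ k ∈ Finset.range n, x k) * ∏ k ∈ Finset.range (n + 1), y k)
    : ∀ n : ℕ,
      x (2 * n) = x 0 * ∏ k ∈ Finset.Icc 1 n, u (2 * k) * v (2 * k - 2) /
        ((b 0 * u (2 * k - 2) + a 0 * v (2 * k - 2)) * (d 0 * u (2 * k - 2) + c 0 * v (2 * k - 2))) ∧
      x (2 * n + 1) = x 1 * ∏ k ∈ Finset.Icc 1 n, (b 0 * u (2 * k) + a 0 * v (2 * k)) *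
        (d 0 * u (2 * k - 2) + c 0 * v (2 * k - 2)) / (u (2 * k) * v (2 * k)) ∧
      y (2 * n) = y 0 * ∏ k ∈ Finset.Icc 1 n, v (2 * k) * u (2 * k - 2) /
        ((d 0 * u (2 * k - 2) + c 0 * v (2 * k - 2)) * (b 0 * u (2 * k - 2) + a 0 * v (2 * k - 2))) ∧
      y (2 * n + 1) = y 1 * ∏ k ∈ Finset.Icc 1 n, (d 0 * u (2 * k) + c 0 * v (2 * k)) *
        (b 0 * u (2 * k - 2) + a 0 * v (2 * k - 2)) / (v (2 * k) * u (2 * k)) := by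
  -- positivity of x, y
  have hxy : ∀ n, 0 < x n ∧ 0 < y n := by
    intro n
    induction n with
    | zero => exact ⟨hx0, hy0⟩
    | succ n ih =>
      rw [hxrec, hyrec]
      exact ⟨add_pos (div_pos (hapos n) ih.1) (div_pos (hbpos n) ih.2),
             add_pos (div_pos (hcpos n) ih.1) (div_pos (hdpos n) ih.2)⟩
  have hupos : ∀ n, 0 < u n := by
    intro n; rw [hu]
    exact mul_pos (Finset.prod_pos fun k _ => (hxy k).1) (Finset.prod_pos fun k _ => (hxy k).2)
  have hvpos : ∀ n, 0 < v n := by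
    intro n; rw [hv]
    exact mul_pos (Finset.prod_pos fun k _ => (hxy k).1) (Finset.prod_pos fun k _ => (hxy k).2)
  -- u, v multiplicative steps
  have hux : ∀ n, u (n + 1) = u n * (x (n + 1) * y n) := by
    intro n
    rw [hu, hu, Finset.prod_range_succ (f := x), Finset.prod_range_succ (f := y)]
    ring
  have hvy : ∀ n, v (n + 1) = v n * (y (n + 1) * x n) := by
    intro n
    rw [hv, hv, Finset.prod_range_succ (f := x), Finset.prod_range_succ (f := y)]
    ring
  -- linear recurrences for u, v
  have hurec : ∀ n, u (n + 1) = b n * u n + a n * v n := by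
    intro n
    have hxn := (hxy n).1.ne'
    have hyn := (hxy n).2.ne'
    rw [hux, hu, hv, hxrec, Finset.prod_range_succ (f := x), Finset.prod_range_succ (f := y)]
    field_simp
    ring
  have hvrec : ∀ n, v (n + 1) = d n * u n + c n * v n := by
    intro n
    have hxn := (hxy n).1.ne'
    have hyn := (hxy n).2.ne'
    rw [hvy, hu, hv, hyrec, Finset.prod_range_succ (f := x), Finset.prod_range_succ (f := y)]
    field_simp
    ring
  -- even-index periodicity
  have heva : ∀ n, a (2 * n) = a 0 := by
    intro n; induction n with
    | zero => rfl
    | succ n ih => rw [Nat.mul_succ, haper, ih]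
  have hevb : ∀ n, b (2 * n) = b 0 := by
    intro n; induction n with
    | zero => rfl
    | succ n ih => rw [Nat.mul_succ, hbper, ih]
  have hevc : ∀ n, c (2 * n) = c 0 := by
    intro n; induction n with
    | zero => rfl
    | succ n ih => rw [Nat.mul_succ, hcper, ih]
  have hevd : ∀ n, d (2 * n) = d 0 := by
    intro n; induction n with
    | zero => rfl
    | succ n ih => rw [Nat.mul_succ, hdper, ih]
  have hou : ∀ n, u (2 * n + 1) = b 0 * u (2 * n) + a 0 * v (2 * n) := by
    intro n; rw [hurec, heva, hevb]
  have hov : ∀ n, v (2 * n + 1) = d 0 * u (2 * n) + c 0 * v (2 * n) := by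
    intro n; rw [hvrec, hevc, hevd]
  -- two-step ratios
  have hstepx : ∀ n, x (n + 2) = x n * (u (n + 2) * v n) / (u (n + 1) * v (n + 1)) := by
    intro n
    have h1 := (hupos (n + 1)).ne'
    have h2 := (hvpos n).ne'
    have h3 := (hxy n).1.ne'
    have h4 := (hxy (n + 1)).2.ne'
    rw [show n + 2 = (n + 1) + 1 from rfl, hux (n + 1), hvy n]
    field_simp
  have hstepy : ∀ n, y (n + 2) = y n * (v (n + 2) * u n) / (v (n + 1) * u (n + 1)) := by
    intro n
    have h1 := (hvpos (n + 1)).ne'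
    have h2 := (hupos n).ne'
    have h3 := (hxy n).2.ne'
    have h4 := (hxy (n + 1)).1.ne'
    rw [show n + 2 = (n + 1) + 1 from rfl, hvy (n + 1), hux n]
    field_simp
  intro n
  induction n with
  | zero => simp
  | succ n ih =>
    obtain ⟨ih1, ih2, ih3, ih4⟩ := ih
    have hle : 1 ≤ n + 1 := Nat.le_add_left 1 n
    have hsub : 2 * (n + 1) - 2 = 2 * n := by omega
    have e1 : 2 * (n + 1) = 2 * n + 2 := by ring
    have e2 : 2 * (n + 1) + 1 = 2 * n + 1 + 2 := by ring
    refine ⟨?_, ?_, ?_, ?_⟩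
    · rw [Finset.prod_Icc_succ_top hle, hsub, e1, hstepx (2 * n), ih1,
        hou n, hov n]
      ring
    · rw [Finset.prod_Icc_succ_top hle, hsub, e2, hstepx (2 * n + 1), ih2,
        show 2 * n + 1 + 2 = 2 * (n + 1) + 1 from by ring, hou (n + 1),
        show 2 * n + 1 + 1 = 2 * (n + 1) from by ring, hov n]
      ring
    · rw [Finset.prod_Icc_succ_top hle, hsub, e1, hstepy (2 * n), ih3,
        hou n, hov n]
      ring
    · rw [Finset.prod_Icc_succ_top hle, hsub, e2, hstepy (2 * n + 1), ih4,
        show 2 * n + 1 + 2 = 2 * (n + 1) + 1 from by ring, hov (n + 1),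
        show 2 * n + 1 + 1 = 2 * (n + 1) from by ring, hou n]
      ring
end

section
/- If the matrix A is invertible (rank two), then the constants C_1 and C_3 are strictly positive. -/
open Finset Filter Topology

theorem stmt_13
    (x y a b c d : ℕ → ℝ)
    (hx0 : 0 < x 0) (hy0 : 0 < y 0)
    (hapos : ∀ n, 0 < a n) (hbpos : ∀ n, 0 < b n)
    (hcpos : ∀ n, 0 < c n) (hdpos : ∀ n, 0 < d n)
    (haper : ∀ n, a (n + 2) = a n) (hbper : ∀ n, b (n + 2) = b n)
    (hcper : ∀ n, c (n + 2) = c n) (hdper : ∀ n, d (n + 2) = d n)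
    (hxrec : ∀ n, x (n + 1) = a n / x n + b n / y n)
    (hyrec : ∀ n, y (n + 1) = c n / x n + d n / y n)
    (A : Matrix (Fin 2) (Fin 2) ℝ)
    (hAdef : A = !![a 1 * d 0 + b 0 * b 1, a 0 * b 1 + a 1 * c 0;
                    b 0 * d 1 + c 1 * d 0, a 0 * d 1 + c 0 * c 1])
    (hA : IsUnit A)
    (D lam1 lam2 : ℝ)
    (hD : D = Real.sqrt ((a 1 * d 0 + b 0 * b 1 - a 0 * d 1 - c 0 * c 1) ^ 2 +
      4 * (a 0 * b 1 + a 1 * c 0) * (b 0 * d 1 + c 1 * d 0)))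
    (hlam1 : lam1 = (a 1 * d 0 + b 0 * b 1 + a 0 * d 1 + c 0 * c 1 + D) / 2)
    (hlam2 : lam2 = (a 1 * d 0 + b 0 * b 1 + a 0 * d 1 + c 0 * c 1 - D) / 2)
    (C1 C3 : ℝ)
    (hC1 : C1 = (a 0 * b 1 + a 1 * c 0) / (lam1 - lam2) *
      ((b 0 * d 1 + c 1 * d 0) / (lam1 - (a 1 * d 0 + b 0 * b 1)) * x 0 + y 0))
    (hC3 : C3 = ((b 0 * d 1 + c 1 * d 0) * x 0 + (lam1 - (a 1 * d 0 + b 0 * b 1)) * y 0) /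
      (lam1 - lam2))
    : 0 < C1 ∧ 0 < C3 := by
  have hr : 0 < a 0 * b 1 + a 1 * c 0 :=
    add_pos (mul_pos (hapos 0) (hbpos 1)) (mul_pos (hapos 1) (hcpos 0))
  have hs : 0 < b 0 * d 1 + c 1 * d 0 :=
    add_pos (mul_pos (hbpos 0) (hdpos 1)) (mul_pos (hcpos 1) (hdpos 0))
  set p := a 1 * d 0 + b 0 * b 1 with hp
  set q := a 0 * d 1 + c 0 * c 1 with hq
  have hDgt : |p - q| < D := by
    rw [hD]
    have h1 : |p - q| = Real.sqrt ((p - q) ^ 2) := by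
      rw [Real.sqrt_sq_eq_abs]
    rw [h1]
    apply Real.sqrt_lt_sqrt (by positivity)
    have h2 : p - a 0 * d 1 - c 0 * c 1 = p - q := by rw [hq]; ring
    rw [h2]
    nlinarith [mul_pos hr hs]
  have hDpos : 0 < D := lt_of_le_of_lt (abs_nonneg _) hDgt
  have h12 : lam1 - lam2 = D := by rw [hlam1, hlam2]; ring
  have hlp : 0 < lam1 - p := by
    rw [hlam1]
    have := le_abs_self (p - q)
    rw [hq] at this
    linarith
  rw [h12] at hC1 hC3
  refine ⟨?_, ?_⟩
  · rw [hC1]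
    exact mul_pos (div_pos hr hDpos)
      (add_pos (mul_pos (div_pos hs hlp) hx0) hy0)
  · rw [hC3]
    exact div_pos (add_pos (mul_pos hs hx0) (mul_pos hlp hy0)) hDpos
end

section
/- If the matrix A is invertible (rank two), then for all n ∈ ℕ one has u_{2n} = C_1·λ_1^n − C_2·λ_2^n and v_{2n} = C_3·λ_1^n − C_4·λ_2^n. -/
/-!
Multiplying the two equations by `x_n y_n` linearizes the system: the products `u_n, v_n`
satisfy `u_{n+1} = b_n u_n + a_n v_n`, `v_{n+1} = d_n u_n + c_n v_n`. Composing two consecutive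
steps, `(u_{2n}, v_{2n})` is an orbit of the constant linear map `A`. Since `A` has positive
off-diagonal entries, its eigenvalues `λ₁ > λ₂` are real and distinct, with eigenvectors
`(β, λᵢ - α)` (`α, β` the first row of `A`); `(C₁, C₃)` and `(C₂, C₄)` are the multiples of these
eigenvectors that decompose `(x₀, y₀)`.
-/

open Finset Function

section LinearSystem

variable {α β γ δ : ℝ}

theorem linear_recurrence_eq_of_eigen {s t : ℕ → ℝ} {lam1 lam2 C1 C2 C3 C4 : ℝ}
    (hs : ∀ n, s (n + 1) = α * s n + β * t n) (ht : ∀ n, t (n + 1) = γ * s n + δ * t n)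
    (h1 : C1 * lam1 = α * C1 + β * C3) (h3 : C3 * lam1 = γ * C1 + δ * C3)
    (h2 : C2 * lam2 = α * C2 + β * C4) (h4 : C4 * lam2 = γ * C2 + δ * C4)
    (hs0 : s 0 = C1 - C2) (ht0 : t 0 = C3 - C4) (n : ℕ) :
    s n = C1 * lam1 ^ n - C2 * lam2 ^ n ∧ t n = C3 * lam1 ^ n - C4 * lam2 ^ n := by
  induction n with
  | zero => simpa using ⟨hs0, ht0⟩
  | succ n ih =>
    rw [hs, ht, ih.1, ih.2, pow_succ, pow_succ]
    constructor
    · linear_combination lam2 ^ n * h2 - lam1 ^ n * h1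
    · linear_combination lam2 ^ n * h4 - lam1 ^ n * h3

theorem eigen_of_mul_sub_eq {lam C C' : ℝ} (hβ : β ≠ 0)
    (hroot : lam ^ 2 = (α + δ) * lam - (α * δ - β * γ)) (hC : C * (lam - α) = β * C') :
    C * lam = α * C + β * C' ∧ C' * lam = γ * C + δ * C' := by
  refine ⟨by linear_combination hC, mul_left_cancel₀ hβ ?_⟩
  linear_combination (δ - lam) * hC + C * hroot

theorem sq_eq_of_eq_half_add_sqrt {D lam : ℝ} (hD : D ^ 2 = (α - δ) ^ 2 + 4 * β * γ)
    (hlam : lam = (α + δ + D) / 2) : lam ^ 2 = (α + δ) * lam - (α * δ - β * γ) := by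
  rw [hlam]
  linear_combination hD / 4

variable {D lam1 lam2 : ℝ} (hβ : 0 < β) (hγ : 0 < γ)
  (hD : D = √((α - δ) ^ 2 + 4 * β * γ))
  (hlam1 : lam1 = (α + δ + D) / 2) (hlam2 : lam2 = (α + δ - D) / 2)
include hβ hγ hD

theorem discr_sq : D ^ 2 = (α - δ) ^ 2 + 4 * β * γ := by
  rw [hD, Real.sq_sqrt (by positivity)]

/-- Positive off-diagonal entries separate the eigenvalues from the diagonal entry `α`. -/
theorem abs_sub_lt_discr : |α - δ| < D :=
  abs_lt_of_sq_lt_sq (by nlinarith [discr_sq hβ hγ hD, mul_pos hβ hγ])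
    (hD ▸ Real.sqrt_nonneg _)

include hlam1 hlam2

theorem linear_recurrence_closed_form {s t : ℕ → ℝ} {C1 C2 C3 C4 : ℝ}
    (hs : ∀ n, s (n + 1) = α * s n + β * t n) (ht : ∀ n, t (n + 1) = γ * s n + δ * t n)
    (hC1 : C1 = β / (lam1 - lam2) * (γ / (lam1 - α) * s 0 + t 0))
    (hC2 : C2 = β / (lam1 - lam2) * (γ / (lam2 - α) * s 0 + t 0))
    (hC3 : C3 = (γ * s 0 + (lam1 - α) * t 0) / (lam1 - lam2))
    (hC4 : C4 = (γ * s 0 + (lam2 - α) * t 0) / (lam1 - lam2)) (n : ℕ) :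
    s n = C1 * lam1 ^ n - C2 * lam2 ^ n ∧ t n = C3 * lam1 ^ n - C4 * lam2 ^ n := by
  have hDsq := discr_sq hβ hγ hD
  obtain ⟨hlt, hgt⟩ := abs_lt.mp (abs_sub_lt_discr hβ hγ hD)
  have hdiff : lam1 - lam2 ≠ 0 := by rw [hlam1, hlam2]; linarith
  have hne1 : lam1 - α ≠ 0 := by rw [hlam1]; linarith
  have hne2 : lam2 - α ≠ 0 := by rw [hlam2]; linarith
  have hroot1 := sq_eq_of_eq_half_add_sqrt hDsq hlam1
  have hroot2 := sq_eq_of_eq_half_add_sqrt (D := -D) (lam := lam2)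
    (by rw [neg_sq, hDsq]) (by rw [hlam2]; ring)
  obtain ⟨h1, h3⟩ := eigen_of_mul_sub_eq hβ.ne' hroot1 (C := C1) (C' := C3) (by
    rw [hC1, hC3]; field_simp)
  obtain ⟨h2, h4⟩ := eigen_of_mul_sub_eq hβ.ne' hroot2 (C := C2) (C' := C4) (by
    rw [hC2, hC4]; field_simp)
  refine linear_recurrence_eq_of_eigen hs ht h1 h3 h2 h4 ?_ ?_ n
  · rw [hC1, hC2]
    field_simp
    rw [hlam1, hlam2]
    linear_combination (-(s 0) * D / 4) * hDsq
  · rw [hC3, hC4]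
    field_simp
    ring

end LinearSystem

section RationalSystem

variable {x y a b c d : ℕ → ℝ}
  (hxrec : ∀ n, x (n + 1) = a n / x n + b n / y n)
  (hyrec : ∀ n, y (n + 1) = c n / x n + d n / y n)

include hxrec hyrec in
theorem system_pos (hx0 : 0 < x 0) (hy0 : 0 < y 0) (ha : ∀ n, 0 < a n) (hb : ∀ n, 0 < b n)
    (hc : ∀ n, 0 < c n) (hd : ∀ n, 0 < d n) (n : ℕ) : 0 < x n ∧ 0 < y n := by
  induction n with
  | zero => exact ⟨hx0, hy0⟩
  | succ n ih =>
    obtain ⟨hxn, hyn⟩ := ih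
    rw [hxrec, hyrec]
    have := ha n; have := hb n; have := hc n; have := hd n
    constructor <;> positivity

variable {u v : ℕ → ℝ}
  (hu : ∀ n, u n = (∏ k ∈ range (n + 1), x k) * ∏ k ∈ range n, y k)
  (hv : ∀ n, v n = (∏ k ∈ range n, x k) * ∏ k ∈ range (n + 1), y k)
include hu hv

include hxrec in
theorem prod_recurrence_fst {n : ℕ} (hx : x n ≠ 0) (hy : y n ≠ 0) :
    u (n + 1) = b n * u n + a n * v n := by
  rw [hu, hu n, hv n, prod_range_succ x, prod_range_succ x, prod_range_succ y, hxrec]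
  field_simp
  ring

include hyrec in
theorem prod_recurrence_snd {n : ℕ} (hx : x n ≠ 0) (hy : y n ≠ 0) :
    v (n + 1) = d n * u n + c n * v n := by
  rw [hv, hv n, hu n, prod_range_succ y, prod_range_succ y, prod_range_succ x, hyrec]
  field_simp
  ring

end RationalSystem

theorem periodic_two_apply {f : ℕ → ℝ} (hf : Periodic f 2) (n : ℕ) :
    f (2 * n) = f 0 ∧ f (2 * n + 1) = f 1 :=
  ⟨by simpa [mul_comm] using hf.nat_mul_eq n, by simpa [mul_comm, add_comm] using hf.nat_mul n 1⟩

theorem two_step_recurrence {a b c d s t : ℕ → ℝ} (ha : Periodic a 2) (hb : Periodic b 2)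
    (hc : Periodic c 2) (hd : Periodic d 2)
    (hs : ∀ n, s (n + 1) = b n * s n + a n * t n) (ht : ∀ n, t (n + 1) = d n * s n + c n * t n)
    (n : ℕ) :
    s (2 * n + 2) = (a 1 * d 0 + b 0 * b 1) * s (2 * n) + (a 0 * b 1 + a 1 * c 0) * t (2 * n) ∧
    t (2 * n + 2) = (b 0 * d 1 + c 1 * d 0) * s (2 * n) + (a 0 * d 1 + c 0 * c 1) * t (2 * n) := by
  obtain ⟨ha0, ha1⟩ := periodic_two_apply ha n
  obtain ⟨hb0, hb1⟩ := periodic_two_apply hb n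
  obtain ⟨hc0, hc1⟩ := periodic_two_apply hc n
  obtain ⟨hd0, hd1⟩ := periodic_two_apply hd n
  rw [hs (2 * n + 1), ht (2 * n + 1), hs (2 * n), ht (2 * n),
    ha0, ha1, hb0, hb1, hc0, hc1, hd0, hd1]
  constructor <;> ring

theorem stmt_14_general
    (x y a b c d : ℕ → ℝ)
    (hx0 : 0 < x 0) (hy0 : 0 < y 0)
    (hapos : ∀ n, 0 < a n) (hbpos : ∀ n, 0 < b n)
    (hcpos : ∀ n, 0 < c n) (hdpos : ∀ n, 0 < d n)
    (haper : ∀ n, a (n + 2) = a n) (hbper : ∀ n, b (n + 2) = b n)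
    (hcper : ∀ n, c (n + 2) = c n) (hdper : ∀ n, d (n + 2) = d n)
    (hxrec : ∀ n, x (n + 1) = a n / x n + b n / y n)
    (hyrec : ∀ n, y (n + 1) = c n / x n + d n / y n)
    (u v : ℕ → ℝ)
    (hu : ∀ n, u n = (∏ k ∈ Finset.range (n + 1), x k) * ∏ k ∈ Finset.range n, y k)
    (hv : ∀ n, v n = (∏ k ∈ Finset.range n, x k) * ∏ k ∈ Finset.range (n + 1), y k)
    (D lam1 lam2 : ℝ)
    (hD : D = Real.sqrt ((a 1 * d 0 + b 0 * b 1 - a 0 * d 1 - c 0 * c 1) ^ 2 +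
      4 * (a 0 * b 1 + a 1 * c 0) * (b 0 * d 1 + c 1 * d 0)))
    (hlam1 : lam1 = (a 1 * d 0 + b 0 * b 1 + a 0 * d 1 + c 0 * c 1 + D) / 2)
    (hlam2 : lam2 = (a 1 * d 0 + b 0 * b 1 + a 0 * d 1 + c 0 * c 1 - D) / 2)
    (C1 C2 C3 C4 : ℝ)
    (hC1 : C1 = (a 0 * b 1 + a 1 * c 0) / (lam1 - lam2) *
      ((b 0 * d 1 + c 1 * d 0) / (lam1 - (a 1 * d 0 + b 0 * b 1)) * x 0 + y 0))
    (hC2 : C2 = (a 0 * b 1 + a 1 * c 0) / (lam1 - lam2) *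
      ((b 0 * d 1 + c 1 * d 0) / (lam2 - (a 1 * d 0 + b 0 * b 1)) * x 0 + y 0))
    (hC3 : C3 = ((b 0 * d 1 + c 1 * d 0) * x 0 + (lam1 - (a 1 * d 0 + b 0 * b 1)) * y 0) /
      (lam1 - lam2))
    (hC4 : C4 = ((b 0 * d 1 + c 1 * d 0) * x 0 + (lam2 - (a 1 * d 0 + b 0 * b 1)) * y 0) /
      (lam1 - lam2))
    : ∀ n : ℕ,
      u (2 * n) = C1 * lam1 ^ n - C2 * lam2 ^ n ∧
      v (2 * n) = C3 * lam1 ^ n - C4 * lam2 ^ n := by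
  intro n
  have hpos := system_pos hxrec hyrec hx0 hy0 hapos hbpos hcpos hdpos
  have hstep := two_step_recurrence haper hbper hcper hdper
    (fun n ↦ prod_recurrence_fst hxrec hu hv (hpos n).1.ne' (hpos n).2.ne')
    (fun n ↦ prod_recurrence_snd hyrec hu hv (hpos n).1.ne' (hpos n).2.ne')
  have hu0 : u 0 = x 0 := by simp [hu]
  have hv0 : v 0 = y 0 := by simp [hv]
  refine linear_recurrence_closed_form (α := a 1 * d 0 + b 0 * b 1) (β := a 0 * b 1 + a 1 * c 0)
    (γ := b 0 * d 1 + c 1 * d 0) (δ := a 0 * d 1 + c 0 * c 1)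
    (D := D) (s := fun n ↦ u (2 * n)) (t := fun n ↦ v (2 * n))
    (by have := hapos 0; have := hapos 1; have := hbpos 1; have := hcpos 0; positivity)
    (by have := hbpos 0; have := hcpos 1; have := hdpos 0; have := hdpos 1; positivity)
    (by rw [hD, sub_sub]) (by rw [hlam1]; ring) (by rw [hlam2]; ring)
    (fun n ↦ (hstep n).1) (fun n ↦ (hstep n).2)
    (by simpa [hu0, hv0] using hC1) (by simpa [hu0, hv0] using hC2)
    (by simpa [hu0, hv0] using hC3) (by simpa [hu0, hv0] using hC4) n

theorem stmt_14
    (x y a b c d : ℕ → ℝ)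
    (hx0 : 0 < x 0) (hy0 : 0 < y 0)
    (hapos : ∀ n, 0 < a n) (hbpos : ∀ n, 0 < b n)
    (hcpos : ∀ n, 0 < c n) (hdpos : ∀ n, 0 < d n)
    (haper : ∀ n, a (n + 2) = a n) (hbper : ∀ n, b (n + 2) = b n)
    (hcper : ∀ n, c (n + 2) = c n) (hdper : ∀ n, d (n + 2) = d n)
    (hxrec : ∀ n, x (n + 1) = a n / x n + b n / y n)
    (hyrec : ∀ n, y (n + 1) = c n / x n + d n / y n)
    (u v : ℕ → ℝ)
    (hu : ∀ n, u n = (∏ k ∈ Finset.range (n + 1), x k) * ∏ k ∈ Finset.range n, y k)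
    (hv : ∀ n, v n = (∏ k ∈ Finset.range n, x k) * ∏ k ∈ Finset.range (n + 1), y k)
    (A : Matrix (Fin 2) (Fin 2) ℝ)
    (hAdef : A = !![a 1 * d 0 + b 0 * b 1, a 0 * b 1 + a 1 * c 0;
                    b 0 * d 1 + c 1 * d 0, a 0 * d 1 + c 0 * c 1])
    (hA : IsUnit A)
    (D lam1 lam2 : ℝ)
    (hD : D = Real.sqrt ((a 1 * d 0 + b 0 * b 1 - a 0 * d 1 - c 0 * c 1) ^ 2 +
      4 * (a 0 * b 1 + a 1 * c 0) * (b 0 * d 1 + c 1 * d 0)))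
    (hlam1 : lam1 = (a 1 * d 0 + b 0 * b 1 + a 0 * d 1 + c 0 * c 1 + D) / 2)
    (hlam2 : lam2 = (a 1 * d 0 + b 0 * b 1 + a 0 * d 1 + c 0 * c 1 - D) / 2)
    (C1 C2 C3 C4 : ℝ)
    (hC1 : C1 = (a 0 * b 1 + a 1 * c 0) / (lam1 - lam2) *
      ((b 0 * d 1 + c 1 * d 0) / (lam1 - (a 1 * d 0 + b 0 * b 1)) * x 0 + y 0))
    (hC2 : C2 = (a 0 * b 1 + a 1 * c 0) / (lam1 - lam2) *
      ((b 0 * d 1 + c 1 * d 0) / (lam2 - (a 1 * d 0 + b 0 * b 1)) * x 0 + y 0))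
    (hC3 : C3 = ((b 0 * d 1 + c 1 * d 0) * x 0 + (lam1 - (a 1 * d 0 + b 0 * b 1)) * y 0) /
      (lam1 - lam2))
    (hC4 : C4 = ((b 0 * d 1 + c 1 * d 0) * x 0 + (lam2 - (a 1 * d 0 + b 0 * b 1)) * y 0) /
      (lam1 - lam2))
    : ∀ n : ℕ,
      u (2 * n) = C1 * lam1 ^ n - C2 * lam2 ^ n ∧
      v (2 * n) = C3 * lam1 ^ n - C4 * lam2 ^ n :=
  stmt_14_general x y a b c d hx0 hy0 hapos hbpos hcpos hdpos haper hbper hcper hdper hxrec hyrec u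
    v hu hv D lam1 lam2 hD hlam1 hlam2 C1 C2 C3 C4 hC1 hC2 hC3 hC4
end

section
/- If the matrix A is invertible (rank two), then for all n ∈ ℕ one has u_{2n+1} = (b_0 C_1 + a_0 C_3)·λ_1^n − (b_0 C_2 + a_0 C_4)·λ_2^n and v_{2n+1} = (d_0 C_1 + c_0 C_3)·λ_1^n − (d_0 C_2 + c_0 C_4)·λ_2^n. -/
open Finset Filter Topology

theorem stmt_15
    (x y a b c d : ℕ → ℝ)
    (hx0 : 0 < x 0) (hy0 : 0 < y 0)
    (hapos : ∀ n, 0 < a n) (hbpos : ∀ n, 0 < b n)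
    (hcpos : ∀ n, 0 < c n) (hdpos : ∀ n, 0 < d n)
    (haper : ∀ n, a (n + 2) = a n) (hbper : ∀ n, b (n + 2) = b n)
    (hcper : ∀ n, c (n + 2) = c n) (hdper : ∀ n, d (n + 2) = d n)
    (hxrec : ∀ n, x (n + 1) = a n / x n + b n / y n)
    (hyrec : ∀ n, y (n + 1) = c n / x n + d n / y n)
    (u v : ℕ → ℝ)
    (hu : ∀ n, u n = (∏ k ∈ Finset.range (n + 1), x k) * ∏ k ∈ Finset.range n, y k)
    (hv : ∀ n, v n = (∏ k ∈ Finset.range n, x k) * ∏ k ∈ Finset.range (n + 1), y k)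
    (A : Matrix (Fin 2) (Fin 2) ℝ)
    (hAdef : A = !![a 1 * d 0 + b 0 * b 1, a 0 * b 1 + a 1 * c 0;
                    b 0 * d 1 + c 1 * d 0, a 0 * d 1 + c 0 * c 1])
    (hA : IsUnit A)
    (D lam1 lam2 : ℝ)
    (hD : D = Real.sqrt ((a 1 * d 0 + b 0 * b 1 - a 0 * d 1 - c 0 * c 1) ^ 2 +
      4 * (a 0 * b 1 + a 1 * c 0) * (b 0 * d 1 + c 1 * d 0)))
    (hlam1 : lam1 = (a 1 * d 0 + b 0 * b 1 + a 0 * d 1 + c 0 * c 1 + D) / 2)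
    (hlam2 : lam2 = (a 1 * d 0 + b 0 * b 1 + a 0 * d 1 + c 0 * c 1 - D) / 2)
    (C1 C2 C3 C4 : ℝ)
    (hC1 : C1 = (a 0 * b 1 + a 1 * c 0) / (lam1 - lam2) *
      ((b 0 * d 1 + c 1 * d 0) / (lam1 - (a 1 * d 0 + b 0 * b 1)) * x 0 + y 0))
    (hC2 : C2 = (a 0 * b 1 + a 1 * c 0) / (lam1 - lam2) *
      ((b 0 * d 1 + c 1 * d 0) / (lam2 - (a 1 * d 0 + b 0 * b 1)) * x 0 + y 0))
    (hC3 : C3 = ((b 0 * d 1 + c 1 * d 0) * x 0 + (lam1 - (a 1 * d 0 + b 0 * b 1)) * y 0) /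
      (lam1 - lam2))
    (hC4 : C4 = ((b 0 * d 1 + c 1 * d 0) * x 0 + (lam2 - (a 1 * d 0 + b 0 * b 1)) * y 0) /
      (lam1 - lam2))
    : ∀ n : ℕ,
      u (2 * n + 1) = (b 0 * C1 + a 0 * C3) * lam1 ^ n - (b 0 * C2 + a 0 * C4) * lam2 ^ n ∧
      v (2 * n + 1) = (d 0 * C1 + c 0 * C3) * lam1 ^ n - (d 0 * C2 + c 0 * C4) * lam2 ^ n := by
  -- positivity of x and y
  have hxy : ∀ n, 0 < x n ∧ 0 < y n := by
    intro n
    induction n with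
    | zero => exact ⟨hx0, hy0⟩
    | succ k ih =>
      obtain ⟨hxk, hyk⟩ := ih
      constructor
      · rw [hxrec]
        have := hapos k; have := hbpos k; positivity
      · rw [hyrec]
        have := hcpos k; have := hdpos k; positivity
  -- recurrences for u and v
  have hurec : ∀ n, u (n + 1) = b n * u n + a n * v n := by
    intro n
    obtain ⟨hxn, hyn⟩ := hxy n
    rw [hu, hu, hv, Finset.prod_range_succ x (n + 1), Finset.prod_range_succ y n,
      Finset.prod_range_succ x n, hxrec]
    field_simp
    ring
  have hvrec : ∀ n, v (n + 1) = d n * u n + c n * v n := by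
    intro n
    obtain ⟨hxn, hyn⟩ := hxy n
    rw [hv, hu, hv, Finset.prod_range_succ y (n + 1), Finset.prod_range_succ x n,
      Finset.prod_range_succ y n, hyrec]
    field_simp
    ring
  -- evaluation of two-periodic sequences
  have hper2 : ∀ (f : ℕ → ℝ), (∀ n, f (n + 2) = f n) →
      ∀ n, f (2 * n) = f 0 ∧ f (2 * n + 1) = f 1 := by
    intro f hf n
    induction n with
    | zero => exact ⟨rfl, rfl⟩
    | succ k ih =>
      constructor
      · have e : 2 * (k + 1) = 2 * k + 2 := by ring
        rw [e, hf, ih.1]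
      · have e : 2 * (k + 1) + 1 = (2 * k + 1) + 2 := by ring
        rw [e, hf, ih.2]
  set p := a 1 * d 0 + b 0 * b 1 with hp
  set q := a 0 * d 1 + c 0 * c 1 with hq
  set r := a 0 * b 1 + a 1 * c 0 with hr
  set s := b 0 * d 1 + c 1 * d 0 with hs
  have hrpos : 0 < r := by
    rw [hr]
    have := hapos 0; have := hapos 1; have := hbpos 1; have := hcpos 0; positivity
  have hspos : 0 < s := by
    rw [hs]
    have := hbpos 0; have := hcpos 1; have := hdpos 0; have := hdpos 1; positivity
  clear_value p q r s
  have hlam1' : lam1 = (p + q + D) / 2 := by rw [hlam1, hq]; ring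
  have hlam2' : lam2 = (p + q - D) / 2 := by rw [hlam2, hq]; ring
  have hD2 : D ^ 2 = (p - q) ^ 2 + 4 * r * s := by
    have hrad : (0:ℝ) ≤ (p - q) ^ 2 + 4 * r * s := by positivity
    have e : (p - a 0 * d 1 - c 0 * c 1) ^ 2 + 4 * r * s = (p - q) ^ 2 + 4 * r * s := by
      rw [hq]; ring
    rw [hD, e, Real.sq_sqrt hrad]
  have hDpos : 0 < D := by
    rw [hD]
    apply Real.sqrt_pos.mpr
    nlinarith [sq_nonneg (p - a 0 * d 1 - c 0 * c 1), mul_pos hrpos hspos]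
  have hdiff : lam1 - lam2 = D := by rw [hlam1', hlam2']; ring
  have hsum : lam1 + lam2 = p + q := by rw [hlam1', hlam2']; ring
  have hprod : lam1 * lam2 = p * q - r * s := by
    rw [hlam1', hlam2']; linear_combination (-1/4 : ℝ) * hD2
  have hdne : lam1 - lam2 ≠ 0 := by rw [hdiff]; exact hDpos.ne'
  have habs : |p - q| < D := by
    apply lt_of_pow_lt_pow_left₀ 2 hDpos.le
    rw [sq_abs]
    have := mul_pos hrpos hspos
    linarith
  have habs' := abs_lt.mp habs
  have hl1p : lam1 - p ≠ 0 := by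
    have h : 0 < lam1 - p := by rw [hlam1']; linarith [habs'.1]
    exact h.ne'
  have hl2p : lam2 - p ≠ 0 := by
    have h : lam2 - p < 0 := by rw [hlam2']; linarith [habs'.2]
    exact h.ne
  have hch1 : (lam1 - p) * (lam1 - q) = r * s := by
    linear_combination lam1 * hsum - hprod
  have hch2 : (lam2 - p) * (lam2 - q) = r * s := by
    linear_combination lam2 * hsum - hprod
  have hch3 : (lam1 - p) * (lam2 - p) = -(r * s) := by
    linear_combination hprod - p * hsum
  -- cleared-denominator forms of the constants
  have hC1' : C1 * ((lam1 - lam2) * (lam1 - p)) = r * (s * x 0 + (lam1 - p) * y 0) := by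
    rw [hC1]; field_simp
  have hC2' : C2 * ((lam1 - lam2) * (lam2 - p)) = r * (s * x 0 + (lam2 - p) * y 0) := by
    rw [hC2]; field_simp
  have hC3' : C3 * (lam1 - lam2) = s * x 0 + (lam1 - p) * y 0 := by
    rw [hC3, div_mul_cancel₀ _ hdne]
  have hC4' : C4 * (lam1 - lam2) = s * x 0 + (lam2 - p) * y 0 := by
    rw [hC4, div_mul_cancel₀ _ hdne]
  -- base-case identities
  have hb1 : C1 - C2 = x 0 := by
    apply mul_right_cancel₀ (mul_ne_zero hdne (mul_ne_zero hl1p hl2p))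
    linear_combination (lam2 - p) * hC1' - (lam1 - p) * hC2' - x 0 * (lam1 - lam2) * hch3
  have hb2 : C3 - C4 = y 0 := by
    apply mul_right_cancel₀ hdne
    linear_combination hC3' - hC4'
  -- step identities
  have su1 : lam1 * C1 = p * C1 + r * C3 := by
    apply mul_right_cancel₀ (mul_ne_zero hdne hl1p)
    linear_combination (lam1 - p) * hC1' - r * (lam1 - p) * hC3'
  have su2 : lam2 * C2 = p * C2 + r * C4 := by
    apply mul_right_cancel₀ (mul_ne_zero hdne hl2p)
    linear_combination (lam2 - p) * hC2' - r * (lam2 - p) * hC4'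
  have sv1 : lam1 * C3 = s * C1 + q * C3 := by
    apply mul_right_cancel₀ (mul_ne_zero hdne hl1p)
    linear_combination lam1 * (lam1 - p) * hC3' - s * hC1' - q * (lam1 - p) * hC3' +
      (s * x 0 + (lam1 - p) * y 0) * hch1
  have sv2 : lam2 * C4 = s * C2 + q * C4 := by
    apply mul_right_cancel₀ (mul_ne_zero hdne hl2p)
    linear_combination lam2 * (lam2 - p) * hC4' - s * hC2' - q * (lam2 - p) * hC4' +
      (s * x 0 + (lam2 - p) * y 0) * hch2
  -- closed form for even indices
  have key : ∀ n, u (2 * n) = C1 * lam1 ^ n - C2 * lam2 ^ n ∧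
      v (2 * n) = C3 * lam1 ^ n - C4 * lam2 ^ n := by
    intro n
    induction n with
    | zero =>
      constructor
      · have h0 : u 0 = x 0 := by
          rw [hu]; norm_num
        simpa [h0] using hb1.symm
      · have h0 : v 0 = y 0 := by
          rw [hv]; norm_num
        simpa [h0] using hb2.symm
    | succ k ih =>
      obtain ⟨ihu, ihv⟩ := ih
      have e : 2 * (k + 1) = (2 * k + 1) + 1 := by ring
      have hu1 : u (2 * k + 1) = b 0 * u (2 * k) + a 0 * v (2 * k) := by
        rw [hurec, (hper2 a haper k).1, (hper2 b hbper k).1]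
      have hv1 : v (2 * k + 1) = d 0 * u (2 * k) + c 0 * v (2 * k) := by
        rw [hvrec, (hper2 c hcper k).1, (hper2 d hdper k).1]
      have hu2 : u (2 * (k + 1)) = b 1 * u (2 * k + 1) + a 1 * v (2 * k + 1) := by
        rw [e, hurec, (hper2 a haper k).2, (hper2 b hbper k).2]
      have hv2 : v (2 * (k + 1)) = d 1 * u (2 * k + 1) + c 1 * v (2 * k + 1) := by
        rw [e, hvrec, (hper2 c hcper k).2, (hper2 d hdper k).2]
      constructor
      · rw [hu2, hu1, hv1, ihu, ihv]
        have h : p * (C1 * lam1 ^ k - C2 * lam2 ^ k) + r * (C3 * lam1 ^ k - C4 * lam2 ^ k)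
            = C1 * lam1 ^ (k + 1) - C2 * lam2 ^ (k + 1) := by
          rw [pow_succ, pow_succ]
          linear_combination lam2 ^ k * su2 - lam1 ^ k * su1
        rw [← h, hp, hr]; ring
      · rw [hv2, hu1, hv1, ihu, ihv]
        have h : s * (C1 * lam1 ^ k - C2 * lam2 ^ k) + q * (C3 * lam1 ^ k - C4 * lam2 ^ k)
            = C3 * lam1 ^ (k + 1) - C4 * lam2 ^ (k + 1) := by
          rw [pow_succ, pow_succ]
          linear_combination lam2 ^ k * sv2 - lam1 ^ k * sv1
        rw [← h, hq, hs]; ring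
  intro n
  obtain ⟨ku, kv⟩ := key n
  constructor
  · rw [hurec, (hper2 a haper n).1, (hper2 b hbper n).1, ku, kv]; ring
  · rw [hvrec, (hper2 c hcper n).1, (hper2 d hdper n).1, ku, kv]; ring
end

section
/- If the matrix A is invertible (rank two), then as k → ∞ the following limits hold: u_{2k}/v_{2k-2} → C_1 λ_1 / C_3, u_{2k}/v_{2k} → C_1/C_3, v_{2k}/u_{2k-2} → C_3 λ_1 / C_1, and v_{2k}/u_{2k} → C_3/C_1. -/
/-! The products satisfy the linear recurrence `u (n+1) = b n * u n + a n * v n`,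
`v (n+1) = d n * u n + c n * v n`, so by two-periodicity the pairs `(u (2k), v (2k))` are the
iterates of the positive matrix `A` applied to `(x 0, y 0)`. Positivity makes the eigenvalues of `A`
real with `λ₁ > |λ₂|`, and `(C₁, C₃)` is the `λ₁`-eigencomponent of `(x 0, y 0)`, positive because
`x 0, y 0 > 0`. Hence `(u (2k), v (2k)) = λ₁ ^ k (C₁, C₃) + λ₂ ^ k (x 0 - C₁, y 0 - C₃)`, and
the four ratios converge after dividing numerator and denominator by `λ₁ ^ k`. -/

open Finset Filter Topology

section RatioLimits

variable {f g : ℕ → ℝ} {l a b : ℝ}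

theorem tendsto_div_of_tendsto_div_pow (hl : l ≠ 0) (hb : b ≠ 0)
    (hf : Tendsto (fun k => f k / l ^ k) atTop (𝓝 a))
    (hg : Tendsto (fun k => g k / l ^ k) atTop (𝓝 b)) :
    Tendsto (fun k => f k / g k) atTop (𝓝 (a / b)) :=
  (hf.div hg hb).congr fun k => div_div_div_cancel_right₀ (pow_ne_zero k hl) (f k) (g k)

theorem tendsto_div_pred_of_tendsto_div_pow (hl : l ≠ 0) (hb : b ≠ 0)
    (hf : Tendsto (fun k => f k / l ^ k) atTop (𝓝 a))
    (hg : Tendsto (fun k => g k / l ^ k) atTop (𝓝 b)) :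
    Tendsto (fun k => f k / g (k - 1)) atTop (𝓝 (a * l / b)) := by
  have hf_succ : Tendsto (fun k => f (k + 1) / l ^ k) atTop (𝓝 (a * l)) := by
    refine ((tendsto_add_atTop_iff_nat 1).2 hf).mul_const l |>.congr fun k => ?_
    rw [pow_succ]
    field_simp
  refine (tendsto_div_of_tendsto_div_pow hl hb hf_succ hg).comp (tendsto_sub_atTop_nat 1)
    |>.congr' ?_
  filter_upwards [eventually_ge_atTop 1] with k hk
  simp only [Function.comp_apply, Nat.sub_add_cancel hk]

end RatioLimits

theorem tendsto_div_pow_of_eq_add {f : ℕ → ℝ} {l₁ l₂ α β : ℝ} (hl : |l₂| < l₁)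
    (hf : ∀ k, f k = α * l₁ ^ k + β * l₂ ^ k) :
    Tendsto (fun k => f k / l₁ ^ k) atTop (𝓝 α) := by
  have hl₁ : 0 < l₁ := (abs_nonneg l₂).trans_lt hl
  have hratio : |l₂ / l₁| < 1 := by rwa [abs_div, abs_of_pos hl₁, div_lt_one hl₁]
  have h := (tendsto_pow_atTop_nhds_zero_of_abs_lt_one hratio).const_mul β |>.const_add α
  rw [mul_zero, add_zero] at h
  refine h.congr fun k => ?_
  rw [hf k, div_pow]
  field_simp

section TwoByTwo

variable {p q r s D : ℝ}

theorem abs_sub_lt_sqrt_discr (hq : 0 < q) (hr : 0 < r) :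
    |p - s| < √((p - s) ^ 2 + 4 * q * r) := by
  rw [← Real.sqrt_sq_eq_abs]
  exact Real.sqrt_lt_sqrt (sq_nonneg _) (by nlinarith [mul_pos hq hr])

theorem sub_mul_sub_eq_of_sq_eq {l : ℝ} (hD : D ^ 2 = (p - s) ^ 2 + 4 * q * r)
    (hl : l = (p + s + D) / 2) : (l - p) * (l - s) = q * r := by
  subst hl
  linear_combination hD / 4

theorem isEigen_of_sub_mul_sub_eq {l α β : ℝ} (hchar : (l - p) * (l - s) = q * r) (hl : l ≠ p)
    (h : α * (l - p) = q * β) : p * α + q * β = l * α ∧ r * α + s * β = l * β := by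
  refine ⟨by linear_combination -h, mul_right_cancel₀ (sub_ne_zero.2 hl) ?_⟩
  linear_combination r * h - β * hchar

theorem linear_recurrence_eq_eigen_sum {u v : ℕ → ℝ} {l₁ l₂ α β α' β' : ℝ}
    (hu : ∀ k, u (k + 1) = p * u k + q * v k) (hv : ∀ k, v (k + 1) = r * u k + s * v k)
    (h₁ : p * α + q * β = l₁ * α ∧ r * α + s * β = l₁ * β)
    (h₂ : p * α' + q * β' = l₂ * α' ∧ r * α' + s * β' = l₂ * β')
    (hu0 : u 0 = α + α') (hv0 : v 0 = β + β') :
    ∀ k, u k = α * l₁ ^ k + α' * l₂ ^ k ∧ v k = β * l₁ ^ k + β' * l₂ ^ k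
  | 0 => by simp [hu0, hv0]
  | k + 1 => by
    obtain ⟨huk, hvk⟩ := linear_recurrence_eq_eigen_sum hu hv h₁ h₂ hu0 hv0 k
    rw [hu, hv, huk, hvk]
    constructor
    · linear_combination l₁ ^ k * h₁.1 + l₂ ^ k * h₂.1
    · linear_combination l₁ ^ k * h₁.2 + l₂ ^ k * h₂.2

end TwoByTwo

theorem tendsto_ratios_of_positive_recurrence {p q r s x₀ y₀ D l₁ l₂ C₁ C₃ : ℝ}
    (hp : 0 < p) (hq : 0 < q) (hr : 0 < r) (hs : 0 < s) (hx₀ : 0 < x₀) (hy₀ : 0 < y₀)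
    (hD : D = √((p - s) ^ 2 + 4 * q * r))
    (hl₁ : l₁ = (p + s + D) / 2) (hl₂ : l₂ = (p + s - D) / 2)
    (hC₁ : C₁ = q / (l₁ - l₂) * (r / (l₁ - p) * x₀ + y₀))
    (hC₃ : C₃ = (r * x₀ + (l₁ - p) * y₀) / (l₁ - l₂))
    {u v : ℕ → ℝ} (hu₀ : u 0 = x₀) (hv₀ : v 0 = y₀)
    (hu : ∀ k, u (k + 1) = p * u k + q * v k) (hv : ∀ k, v (k + 1) = r * u k + s * v k) :
    Tendsto (fun k => u k / v (k - 1)) atTop (𝓝 (C₁ * l₁ / C₃)) ∧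
    Tendsto (fun k => u k / v k) atTop (𝓝 (C₁ / C₃)) ∧
    Tendsto (fun k => v k / u (k - 1)) atTop (𝓝 (C₃ * l₁ / C₁)) ∧
    Tendsto (fun k => v k / u k) atTop (𝓝 (C₃ / C₁)) := by
  have hgap : |p - s| < D := hD ▸ abs_sub_lt_sqrt_discr hq hr
  have hD₂ : D ^ 2 = (p - s) ^ 2 + 4 * q * r := by
    rw [hD, Real.sq_sqrt (by positivity)]
  have hl₁p : 0 < l₁ - p := by rw [hl₁]; linarith [le_abs_self (p - s)]
  have hl₂p : l₂ < p := by rw [hl₂]; linarith [neg_abs_le (p - s)]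
  have hdiff : l₁ - l₂ = D := by rw [hl₁, hl₂]; ring
  have hDpos : 0 < D := (abs_nonneg _).trans_lt hgap
  have hprod : (l₁ - p) * (l₂ - p) = -(q * r) := by
    rw [hl₁, hl₂]; linear_combination -hD₂ / 4
  have hC₃D : C₃ * D = r * x₀ + (l₁ - p) * y₀ := by
    rw [hC₃, hdiff]; field_simp
  have heigen₁ : C₁ * (l₁ - p) = q * C₃ := by
    rw [hC₁, hC₃, hdiff]; field_simp
  have heigen₂ : (x₀ - C₁) * (l₂ - p) = q * (y₀ - C₃) := by
    refine mul_right_cancel₀ hl₁p.ne' ?_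
    linear_combination -(l₂ - p) * heigen₁ + x₀ * hprod + q * C₃ * hdiff + q * hC₃D
  have hclosed := linear_recurrence_eq_eigen_sum hu hv
    (isEigen_of_sub_mul_sub_eq (sub_mul_sub_eq_of_sq_eq hD₂ hl₁) (sub_pos.1 hl₁p).ne' heigen₁)
    (isEigen_of_sub_mul_sub_eq (sub_mul_sub_eq_of_sq_eq (D := -D) (by linear_combination hD₂)
      (by rw [hl₂]; ring)) hl₂p.ne heigen₂)
    (by rw [hu₀]; ring) (by rw [hv₀]; ring)
  have hspec : |l₂| < l₁ := abs_lt.2 ⟨by rw [hl₁, hl₂]; linarith, by linarith [sub_pos.1 hl₁p]⟩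
  have hl₁₀ : l₁ ≠ 0 := ((abs_nonneg l₂).trans_lt hspec).ne'
  have hC₁pos : 0 < C₁ := by
    rw [hC₁, hdiff]; positivity
  have hC₃pos : 0 < C₃ := by
    rw [hC₃, hdiff]; positivity
  have hU := tendsto_div_pow_of_eq_add hspec fun k => (hclosed k).1
  have hV := tendsto_div_pow_of_eq_add hspec fun k => (hclosed k).2
  exact ⟨tendsto_div_pred_of_tendsto_div_pow hl₁₀ hC₃pos.ne' hU hV,
    tendsto_div_of_tendsto_div_pow hl₁₀ hC₃pos.ne' hU hV,
    tendsto_div_pred_of_tendsto_div_pow hl₁₀ hC₁pos.ne' hV hU,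
    tendsto_div_of_tendsto_div_pow hl₁₀ hC₁pos.ne' hV hU⟩

theorem periodic_two_apply_even_odd {α : Type*} {f : ℕ → α} (hf : ∀ n, f (n + 2) = f n)
    (k : ℕ) : f (2 * k) = f 0 ∧ f (2 * k + 1) = f 1 := by
  have hper : Function.Periodic f 2 := hf
  exact ⟨by rw [mul_comm]; exact hper.nat_mul_eq k,
    by rw [add_comm, mul_comm]; exact hper.nat_mul k 1⟩

section InverseRecurrence

variable {x y a b c d u v : ℕ → ℝ}

theorem inverse_recurrence_pos (hx₀ : 0 < x 0) (hy₀ : 0 < y 0)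
    (ha : ∀ n, 0 < a n) (hb : ∀ n, 0 < b n) (hc : ∀ n, 0 < c n) (hd : ∀ n, 0 < d n)
    (hx : ∀ n, x (n + 1) = a n / x n + b n / y n) (hy : ∀ n, y (n + 1) = c n / x n + d n / y n) :
    ∀ n, 0 < x n ∧ 0 < y n
  | 0 => ⟨hx₀, hy₀⟩
  | n + 1 => by
    obtain ⟨hxn, hyn⟩ := inverse_recurrence_pos hx₀ hy₀ ha hb hc hd hx hy n
    have := ha n; have := hb n; have := hc n; have := hd n
    rw [hx, hy]
    exact ⟨by positivity, by positivity⟩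

theorem prod_recurrence_succ
    (hu : ∀ n, u n = (∏ k ∈ range (n + 1), x k) * ∏ k ∈ range n, y k)
    (hv : ∀ n, v n = (∏ k ∈ range n, x k) * ∏ k ∈ range (n + 1), y k)
    (hx : ∀ n, x (n + 1) = a n / x n + b n / y n) (hy : ∀ n, y (n + 1) = c n / x n + d n / y n)
    {n : ℕ} (hxn : x n ≠ 0) (hyn : y n ≠ 0) :
    u (n + 1) = b n * u n + a n * v n ∧ v (n + 1) = d n * u n + c n * v n := by
  simp only [hu, hv, prod_range_succ, hx, hy]
  constructor <;> field_simp <;> ring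

theorem even_step_of_periodic (ha : ∀ n, a (n + 2) = a n) (hb : ∀ n, b (n + 2) = b n)
    (hc : ∀ n, c (n + 2) = c n) (hd : ∀ n, d (n + 2) = d n)
    (hu : ∀ n, u (n + 1) = b n * u n + a n * v n) (hv : ∀ n, v (n + 1) = d n * u n + c n * v n)
    (k : ℕ) :
    u (2 * (k + 1)) =
        (a 1 * d 0 + b 0 * b 1) * u (2 * k) + (a 0 * b 1 + a 1 * c 0) * v (2 * k) ∧
      v (2 * (k + 1)) =
        (b 0 * d 1 + c 1 * d 0) * u (2 * k) + (a 0 * d 1 + c 0 * c 1) * v (2 * k) := by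
  obtain ⟨ha₀, ha₁⟩ := periodic_two_apply_even_odd ha k
  obtain ⟨hb₀, hb₁⟩ := periodic_two_apply_even_odd hb k
  obtain ⟨hc₀, hc₁⟩ := periodic_two_apply_even_odd hc k
  obtain ⟨hd₀, hd₁⟩ := periodic_two_apply_even_odd hd k
  rw [show 2 * (k + 1) = 2 * k + 1 + 1 by ring, hu (2 * k + 1), hv (2 * k + 1), hu (2 * k),
    hv (2 * k), ha₀, ha₁, hb₀, hb₁, hc₀, hc₁, hd₀, hd₁]
  constructor <;> ring

end InverseRecurrence

theorem stmt_16_general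
    (x y a b c d : ℕ → ℝ)
    (hx0 : 0 < x 0) (hy0 : 0 < y 0)
    (hapos : ∀ n, 0 < a n) (hbpos : ∀ n, 0 < b n)
    (hcpos : ∀ n, 0 < c n) (hdpos : ∀ n, 0 < d n)
    (haper : ∀ n, a (n + 2) = a n) (hbper : ∀ n, b (n + 2) = b n)
    (hcper : ∀ n, c (n + 2) = c n) (hdper : ∀ n, d (n + 2) = d n)
    (hxrec : ∀ n, x (n + 1) = a n / x n + b n / y n)
    (hyrec : ∀ n, y (n + 1) = c n / x n + d n / y n)
    (u v : ℕ → ℝ)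
    (hu : ∀ n, u n = (∏ k ∈ Finset.range (n + 1), x k) * ∏ k ∈ Finset.range n, y k)
    (hv : ∀ n, v n = (∏ k ∈ Finset.range n, x k) * ∏ k ∈ Finset.range (n + 1), y k)
    (D lam1 lam2 : ℝ)
    (hD : D = Real.sqrt ((a 1 * d 0 + b 0 * b 1 - a 0 * d 1 - c 0 * c 1) ^ 2 +
      4 * (a 0 * b 1 + a 1 * c 0) * (b 0 * d 1 + c 1 * d 0)))
    (hlam1 : lam1 = (a 1 * d 0 + b 0 * b 1 + a 0 * d 1 + c 0 * c 1 + D) / 2)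
    (hlam2 : lam2 = (a 1 * d 0 + b 0 * b 1 + a 0 * d 1 + c 0 * c 1 - D) / 2)
    (C1 C3 : ℝ)
    (hC1 : C1 = (a 0 * b 1 + a 1 * c 0) / (lam1 - lam2) *
      ((b 0 * d 1 + c 1 * d 0) / (lam1 - (a 1 * d 0 + b 0 * b 1)) * x 0 + y 0))
    (hC3 : C3 = ((b 0 * d 1 + c 1 * d 0) * x 0 + (lam1 - (a 1 * d 0 + b 0 * b 1)) * y 0) /
      (lam1 - lam2))
    : Tendsto (fun k => u (2 * k) / v (2 * k - 2)) atTop (nhds (C1 * lam1 / C3)) ∧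
      Tendsto (fun k => u (2 * k) / v (2 * k)) atTop (nhds (C1 / C3)) ∧
      Tendsto (fun k => v (2 * k) / u (2 * k - 2)) atTop (nhds (C3 * lam1 / C1)) ∧
      Tendsto (fun k => v (2 * k) / u (2 * k)) atTop (nhds (C3 / C1)) := by
  have hxy := inverse_recurrence_pos hx0 hy0 hapos hbpos hcpos hdpos hxrec hyrec
  have hstep n := prod_recurrence_succ hu hv hxrec hyrec (hxy n).1.ne' (hxy n).2.ne'
  have heven := even_step_of_periodic haper hbper hcper hdper
    (fun n => (hstep n).1) (fun n => (hstep n).2)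
  have := hapos 0; have := hapos 1; have := hbpos 0; have := hbpos 1
  have := hcpos 0; have := hcpos 1; have := hdpos 0; have := hdpos 1
  obtain ⟨h₁, h₂, h₃, h₄⟩ := tendsto_ratios_of_positive_recurrence (D := D) (l₁ := lam1)
    (l₂ := lam2) (u := fun k => u (2 * k)) (v := fun k => v (2 * k))
    (by positivity) (by positivity) (by positivity) (by positivity) hx0 hy0
    (by rw [sub_add_eq_sub_sub]; exact hD) (by rw [hlam1]; ring) (by rw [hlam2]; ring) hC1 hC3
    (by simp [hu]) (by simp [hv]) (fun k => (heven k).1) (fun k => (heven k).2)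
  have htwo_pred (k : ℕ) : 2 * k - 2 = 2 * (k - 1) := by omega
  simp only [htwo_pred]
  exact ⟨h₁, h₂, h₃, h₄⟩

theorem stmt_16
    (x y a b c d : ℕ → ℝ)
    (hx0 : 0 < x 0) (hy0 : 0 < y 0)
    (hapos : ∀ n, 0 < a n) (hbpos : ∀ n, 0 < b n)
    (hcpos : ∀ n, 0 < c n) (hdpos : ∀ n, 0 < d n)
    (haper : ∀ n, a (n + 2) = a n) (hbper : ∀ n, b (n + 2) = b n)
    (hcper : ∀ n, c (n + 2) = c n) (hdper : ∀ n, d (n + 2) = d n)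
    (hxrec : ∀ n, x (n + 1) = a n / x n + b n / y n)
    (hyrec : ∀ n, y (n + 1) = c n / x n + d n / y n)
    (u v : ℕ → ℝ)
    (hu : ∀ n, u n = (∏ k ∈ Finset.range (n + 1), x k) * ∏ k ∈ Finset.range n, y k)
    (hv : ∀ n, v n = (∏ k ∈ Finset.range n, x k) * ∏ k ∈ Finset.range (n + 1), y k)
    (A : Matrix (Fin 2) (Fin 2) ℝ)
    (hAdef : A = !![a 1 * d 0 + b 0 * b 1, a 0 * b 1 + a 1 * c 0;
                    b 0 * d 1 + c 1 * d 0, a 0 * d 1 + c 0 * c 1])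
    (hA : IsUnit A)
    (D lam1 lam2 : ℝ)
    (hD : D = Real.sqrt ((a 1 * d 0 + b 0 * b 1 - a 0 * d 1 - c 0 * c 1) ^ 2 +
      4 * (a 0 * b 1 + a 1 * c 0) * (b 0 * d 1 + c 1 * d 0)))
    (hlam1 : lam1 = (a 1 * d 0 + b 0 * b 1 + a 0 * d 1 + c 0 * c 1 + D) / 2)
    (hlam2 : lam2 = (a 1 * d 0 + b 0 * b 1 + a 0 * d 1 + c 0 * c 1 - D) / 2)
    (C1 C3 : ℝ)
    (hC1 : C1 = (a 0 * b 1 + a 1 * c 0) / (lam1 - lam2) *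
      ((b 0 * d 1 + c 1 * d 0) / (lam1 - (a 1 * d 0 + b 0 * b 1)) * x 0 + y 0))
    (hC3 : C3 = ((b 0 * d 1 + c 1 * d 0) * x 0 + (lam1 - (a 1 * d 0 + b 0 * b 1)) * y 0) /
      (lam1 - lam2))
    : Tendsto (fun k => u (2 * k) / v (2 * k - 2)) atTop (nhds (C1 * lam1 / C3)) ∧
      Tendsto (fun k => u (2 * k) / v (2 * k)) atTop (nhds (C1 / C3)) ∧
      Tendsto (fun k => v (2 * k) / u (2 * k - 2)) atTop (nhds (C3 * lam1 / C1)) ∧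
      Tendsto (fun k => v (2 * k) / u (2 * k)) atTop (nhds (C3 / C1)) :=
  stmt_16_general x y a b c d hx0 hy0 hapos hbpos hcpos hdpos haper hbper hcper hdper hxrec hyrec u
    v hu hv D lam1 lam2 hD hlam1 hlam2 C1 C3 hC1 hC3
end
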